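/- Let μ be a Borel probability measure on ℝ², let Γ be a grid on ℝ² with C cells, let n ≥ 2, and let D_n be the empirical measure of n iid points drawn from μ. Call a cell of Γ large if its μ-mass exceeds 9·log₂(n)/n. Then with probability at least 1 − 2C/n³, the sum over all large cells (i,j) of |μ(cell (i,j)) − D_n(cell (i,j))| is at most 3·C·(log₂ n)^{1/2}/n^{1/2}. -/

import Mathlib

open MeasureTheory Finset

noncomputable section

/-- A grid with `r` rows and `c` columns on ℝ², given by `r - 1` strictly increasing
row cut points and `c - 1` strictly increasing column cut points. -/
structure Grid (r c : ℕ) where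
  rowCuts : Fin (r - 1) → ℝ
  colCuts : Fin (c - 1) → ℝ
  rowCuts_mono : StrictMono rowCuts
  colCuts_mono : StrictMono colCuts

/-- Interval number `i` of the partition of ℝ induced by the cut points `cuts`:
`[cuts (i-1), cuts i)`, with the first interval unbounded below and the last
unbounded above. -/
def cutInterval {m : ℕ} (cuts : Fin (m - 1) → ℝ) (i : Fin m) : Set ℝ :=
  {t | (∀ j : Fin (m - 1), (j : ℕ) < (i : ℕ) → cuts j ≤ t) ∧
       (∀ j : Fin (m - 1), (i : ℕ) ≤ (j : ℕ) → t < cuts j)}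

/-- Cell `(i, j)` (row `i`, column `j`) of a grid, as a subset of ℝ². -/
def Grid.cell {r c : ℕ} (G : Grid r c) (i : Fin r) (j : Fin c) : Set (ℝ × ℝ) :=
  {p | p.1 ∈ cutInterval G.colCuts j ∧ p.2 ∈ cutInterval G.rowCuts i}

/-- The probability mass function on `{1,…,r} × {1,…,c}` induced by a measure `ν`
on a grid `G`: it assigns to `(i, j)` the `ν`-measure of cell `(i, j)`. -/
def gridPMF {r c : ℕ} (ν : Measure (ℝ × ℝ)) (G : Grid r c) (i : Fin r) (j : Fin c) : ℝ :=
  (ν (G.cell i j)).toReal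

open Classical in
/-- The empirical measure of the sample `ω`, as a real-valued set function. -/
def empMeas {n : ℕ} (ω : Fin n → ℝ × ℝ) (S : Set (ℝ × ℝ)) : ℝ :=
  ((Finset.univ.filter (fun i => ω i ∈ S)).card : ℝ) / n

/-- The pmf on cells induced by the empirical measure of the sample `ω`. -/
def empGridPMF {n r c : ℕ} (ω : Fin n → ℝ × ℝ) (G : Grid r c) (i : Fin r) (j : Fin c) : ℝ :=
  empMeas ω (G.cell i j)

/-- Mutual information (base 2) of a pmf `p` on `Fin r × Fin c`, with the convention
that terms with `p i j = 0` vanish. -/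
def MI {r c : ℕ} (p : Fin r → Fin c → ℝ) : ℝ :=
  ∑ i, ∑ j, if p i j = 0 then 0
    else p i j * Real.logb 2 (p i j / ((∑ j', p i j') * (∑ i', p i' j)))


/-!
Hoeffding's inequality for the centred indicators of a cell, which are sub-Gaussian with
parameter `1/4`, bounds the probability that the empirical mass of the cell deviates from its
`μ`-mass by at least `t = 3 √(log₂ n / n)` by `2 exp (-2 n t²) = 2 exp (-18 log₂ n) ≤ 2 / n³`.
Off the union of these `C` events every cell, large or not, deviates by less than `t`, so the
sum over the large cells is at most `C t`.
-/

open ProbabilityTheory Real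

lemma measurableSet_cutInterval {m : ℕ} (cuts : Fin (m - 1) → ℝ) (i : Fin m) :
    MeasurableSet (cutInterval cuts i) := by
  simp only [cutInterval, Set.ofPred_and, Set.ofPred_forall]
  refine .inter (.iInter fun j => .iInter fun _ => measurableSet_Ici)
    (.iInter fun j => .iInter fun _ => measurableSet_Iio)

lemma Grid.measurableSet_cell {r c : ℕ} (G : Grid r c) (i : Fin r) (j : Fin c) :
    MeasurableSet (G.cell i j) :=
  (measurable_fst (measurableSet_cutInterval _ _)).inter
    (measurable_snd (measurableSet_cutInterval _ _))

lemma natCast_mul_empMeas {n : ℕ} (hn : 0 < n) (ω : Fin n → ℝ × ℝ) (S : Set (ℝ × ℝ)) :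
    n * empMeas ω S = ∑ i, S.indicator 1 (ω i) := by
  rw [empMeas, mul_div_cancel₀ _ (by positivity), Finset.card_filter]
  push_cast
  refine Finset.sum_congr rfl fun i _ => ?_
  by_cases h : ω i ∈ S <;> simp [h]

lemma ProbabilityTheory.HasSubgaussianMGF.measureReal_le_abs_le {Ω : Type*} [MeasurableSpace Ω]
    {μ : Measure Ω} [IsFiniteMeasure μ] {X : Ω → ℝ} {c : NNReal} (h : HasSubgaussianMGF X c μ)
    {ε : ℝ} (hε : 0 ≤ ε) :
    μ.real {ω | ε ≤ |X ω|} ≤ 2 * exp (-ε ^ 2 / (2 * c)) := by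
  have hsub : {ω | ε ≤ |X ω|} ⊆ {ω | ε ≤ X ω} ∪ {ω | ε ≤ (-X) ω} := fun ω hω =>
    (le_abs.1 hω : ε ≤ X ω ∨ ε ≤ -X ω)
  calc μ.real {ω | ε ≤ |X ω|} ≤ μ.real {ω | ε ≤ X ω} + μ.real {ω | ε ≤ (-X) ω} :=
        (measureReal_mono hsub).trans (measureReal_union_le _ _)
    _ ≤ 2 * exp (-ε ^ 2 / (2 * c)) := by
        linarith [h.measure_ge_le hε, h.neg.measure_ge_le hε]

lemma hasSubgaussianMGF_indicator_sub_measureReal {α : Type*} [MeasurableSpace α]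
    {μ : Measure α} [IsProbabilityMeasure μ] {S : Set α} (hS : MeasurableSet S) :
    HasSubgaussianMGF (fun x => S.indicator 1 x - μ.real S) 4⁻¹ μ := by
  have h := hasSubgaussianMGF_of_mem_Icc (μ := μ) (a := 0) (b := 1)
    (measurable_one.indicator hS).aemeasurable
    (ae_of_all _ fun x => ⟨Set.indicator_nonneg (fun _ _ => zero_le_one) x,
      Set.indicator_le_self' (fun _ _ => zero_le_one) x⟩)
  rw [integral_indicator_one hS] at h
  convert h using 1
  norm_num

lemma measureReal_le_abs_sub_empMeas_le (μ : Measure (ℝ × ℝ)) [IsProbabilityMeasure μ]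
    {S : Set (ℝ × ℝ)} (hS : MeasurableSet S) {n : ℕ} (hn : 0 < n) {t : ℝ} (ht : 0 ≤ t) :
    (Measure.pi fun _ : Fin n => μ).real {ω | t ≤ |μ.real S - empMeas ω S|}
      ≤ 2 * exp (-2 * n * t ^ 2) := by
  have hsum : HasSubgaussianMGF (fun ω : Fin n → ℝ × ℝ => ∑ i, (S.indicator 1 (ω i) - μ.real S))
      (∑ _i : Fin n, 4⁻¹) (Measure.pi fun _ : Fin n => μ) := by
    refine HasSubgaussianMGF.sum_of_iIndepFun
      (iIndepFun_pi fun _ => (measurable_one.indicator hS).aemeasurable.sub_const _)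
      fun i _ => HasSubgaussianMGF.of_map (X := fun x => S.indicator 1 x - μ.real S)
        (measurable_pi_apply i).aemeasurable ?_
    rw [(measurePreserving_eval _ i).map_eq]
    exact hasSubgaussianMGF_indicator_sub_measureReal hS
  have hset : {ω : Fin n → ℝ × ℝ | t ≤ |μ.real S - empMeas ω S|}
      = {ω | n * t ≤ |∑ i, (S.indicator 1 (ω i) - μ.real S)|} := by
    ext ω
    rw [Set.mem_ofPred_eq, Set.mem_ofPred_eq, Finset.sum_sub_distrib, ← natCast_mul_empMeas hn,
      Finset.sum_const, Finset.card_univ, Fintype.card_fin, nsmul_eq_mul, ← mul_sub, abs_mul,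
      abs_sub_comm, Nat.abs_cast, mul_le_mul_iff_of_pos_left (by positivity)]
  rw [hset]
  refine (hsum.measureReal_le_abs_le (by positivity)).trans_eq ?_
  have hn' : (n : ℝ) ≠ 0 := by positivity
  congr 2
  simp only [Finset.sum_const, Finset.card_univ, Fintype.card_fin, nsmul_eq_mul, NNReal.coe_mul,
    NNReal.coe_natCast, NNReal.coe_inv, NNReal.coe_ofNat]
  field_simp
  ring

lemma exp_neg_three_mul_logb_two_le {x : ℝ} (hx : 1 ≤ x) :
    exp (-(3 * logb 2 x)) ≤ (x ^ 3)⁻¹ := by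
  have hlog : log x ≤ logb 2 x :=
    le_div_self (log_nonneg hx) (log_pos one_lt_two) (log_two_lt_d9.le.trans (by norm_num))
  calc exp (-(3 * logb 2 x)) ≤ exp (-log (x ^ 3)) :=
        exp_le_exp.2 (by rw [log_pow]; push_cast; linarith)
    _ = (x ^ 3)⁻¹ := by rw [exp_neg, exp_log (by positivity)]

lemma measureReal_sqrt_logb_le_abs_sub_empMeas_le (μ : Measure (ℝ × ℝ))
    [IsProbabilityMeasure μ] {S : Set (ℝ × ℝ)} (hS : MeasurableSet S) {n : ℕ} (hn : 0 < n) :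
    (Measure.pi fun _ : Fin n => μ).real
        {ω | 3 * √(logb 2 n) / √n ≤ |μ.real S - empMeas ω S|} ≤ 2 / n ^ 3 := by
  have hn1 : (1 : ℝ) ≤ n := by exact_mod_cast hn
  have hL : 0 ≤ logb 2 n := logb_nonneg one_lt_two hn1
  have hexp : 2 * n * (3 * √(logb 2 n) / √n) ^ 2 = 18 * logb 2 n := by
    rw [div_pow, mul_pow, sq_sqrt hL, sq_sqrt (by positivity)]
    field_simp
    ring
  refine (measureReal_le_abs_sub_empMeas_le μ hS hn (by positivity)).trans ?_
  calc 2 * exp (-2 * n * (3 * √(logb 2 n) / √n) ^ 2) ≤ 2 * exp (-(3 * logb 2 n)) := by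
        rw [neg_mul, neg_mul, hexp]; gcongr; linarith
    _ ≤ 2 / n ^ 3 := by
        rw [div_eq_mul_inv]; gcongr; exact exp_neg_three_mul_logb_two_le hn1

lemma ofReal_one_sub_card_mul_le_of_compl_iUnion_subset {Ω ι : Type*} [MeasurableSpace Ω]
    [Fintype ι] {P : Measure Ω} [IsProbabilityMeasure P] {E : Set Ω} {B : ι → Set Ω} {δ : ℝ}
    (hB : ∀ i, P.real (B i) ≤ δ) (hE : (⋃ i, B i)ᶜ ⊆ E) :
    ENNReal.ofReal (1 - Fintype.card ι * δ) ≤ P E := by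
  have hcompl : P.real Eᶜ ≤ Fintype.card ι * δ :=
    calc P.real Eᶜ ≤ ∑ i, P.real (B i) :=
          (measureReal_mono (Set.compl_subset_comm.1 hE)).trans (measureReal_iUnion_fintype_le B)
      _ ≤ Fintype.card ι * δ := by
          simpa using Finset.sum_le_sum fun i (_ : i ∈ Finset.univ) => hB i
  have hunion : 1 ≤ P.real E + P.real Eᶜ := by
    simpa using measureReal_union_le (μ := P) E Eᶜ
  rw [ENNReal.ofReal_le_iff_le_toReal (measure_ne_top P E), ← measureReal_def]
  linarith

theorem stmt11 (μ : Measure (ℝ × ℝ)) [IsProbabilityMeasure μ]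
    (r c : ℕ) (Γ : Grid r c) (n : ℕ) (hn : 2 ≤ n) :
    ENNReal.ofReal (1 - 2 * ((r * c : ℕ) : ℝ) / (n : ℝ) ^ 3) ≤
      (Measure.pi fun _ : Fin n => μ)
        {ω | (∑ i, ∑ j,
            if 9 * Real.logb 2 n / n < gridPMF μ Γ i j then
              |gridPMF μ Γ i j - empGridPMF ω Γ i j| else 0) ≤
          3 * ((r * c : ℕ) : ℝ) * Real.sqrt (Real.logb 2 n) / Real.sqrt n} := by
  have hbound : 1 - 2 * ((r * c : ℕ) : ℝ) / (n : ℝ) ^ 3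
      = 1 - Fintype.card (Fin r × Fin c) * (2 / n ^ 3) := by
    simp only [Fintype.card_prod, Fintype.card_fin]
    push_cast
    ring
  simp only [hbound, gridPMF, empGridPMF, ← measureReal_def]
  refine ofReal_one_sub_card_mul_le_of_compl_iUnion_subset
    (B := fun ij =>
      {ω | 3 * √(logb 2 n) / √n ≤ |μ.real (Γ.cell ij.1 ij.2) - empMeas ω (Γ.cell ij.1 ij.2)|})
    (fun ij => ?_) ?_
  · exact measureReal_sqrt_logb_le_abs_sub_empMeas_le μ (Γ.measurableSet_cell ij.1 ij.2)
      (by omega)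
  intro ω hω
  simp only [Set.compl_iUnion, Set.mem_iInter, Set.mem_compl_iff, Set.mem_ofPred_eq, not_le,
    Prod.forall] at hω
  calc (∑ i, ∑ j, if 9 * logb 2 n / n < μ.real (Γ.cell i j) then
          |μ.real (Γ.cell i j) - empMeas ω (Γ.cell i j)| else 0)
      ≤ ∑ _i : Fin r, ∑ _j : Fin c, 3 * √(logb 2 n) / √n :=
        Finset.sum_le_sum fun i _ => Finset.sum_le_sum fun j _ => by
          split_ifs
          exacts [(hω i j).le, by positivity]
    _ = 3 * ((r * c : ℕ) : ℝ) * √(logb 2 n) / √n := by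
        simp only [Finset.sum_const, Finset.card_univ, Fintype.card_fin, nsmul_eq_mul]
        push_cast
        ring

end
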